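/- Let X be a Banach lattice admitting a strictly positive functional μ (i.e., μ(x) > 0 whenever x > 0). Equip X with the equivalent lattice norm ‖x‖_μ := ‖x‖ + μ(|x|). Then every lattice homomorphism on X that attains its ‖·‖_μ-norm is a positive multiple of a coordinate functional of an atom. -/

import Mathlib

/-!
Put `a = |x₀|`, so that `f a` is the `‖·‖_μ`-norm of `f` and `‖a‖_μ ≤ 1`. If `0 < y ≤ a` and
`f y = 0`, then `f (a - y) = f a` while `‖a - y‖_μ < ‖a‖_μ` (the norm is solid and `μ y > 0`), so
normalising `a - y` would beat the norm of `f`. Thus `f` kills no nonzero element of `[0, a]`.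
For a lattice homomorphism this makes `a` an atom, since the positive and negative parts of
`y - (f y / f a) • a` lie in `[0, a]` and are killed by `f`; and `f / f a` is its coordinate
functional, since `f` kills `|x - (f x / f a) • a| ⊓ a`.
-/

/-- A real-valued lattice homomorphism on a Banach lattice. -/
def IsLatticeHomFunctional {X : Type*} [NormedAddCommGroup X] [Lattice X] [HasSolidNorm X] [IsOrderedAddMonoid X] [NormedSpace ℝ X]
    (f : X →L[ℝ] ℝ) : Prop :=
  ∀ x y : X, f (x ⊔ y) = max (f x) (f y)

/-- An atom of a Banach lattice: a positive element generating a one-dimensional ideal. -/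
def IsLatAtom {X : Type*} [NormedAddCommGroup X] [Lattice X] [HasSolidNorm X] [IsOrderedAddMonoid X] [NormedSpace ℝ X] (x₀ : X) : Prop :=
  0 < x₀ ∧ ∀ y : X, 0 ≤ y → y ≤ x₀ → ∃ r : ℝ, y = r • x₀

/-- `l` is the coordinate functional of the atom `x₀`: the band projection onto the span of
`x₀` is `x ↦ l x • x₀`, i.e. `x - l x • x₀` is disjoint from `x₀` for every `x`. -/
def IsCoordinateFunctional {X : Type*} [NormedAddCommGroup X] [Lattice X] [HasSolidNorm X] [IsOrderedAddMonoid X] [NormedSpace ℝ X]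
    (l : X →L[ℝ] ℝ) (x₀ : X) : Prop :=
  ∀ x : X, |x - l x • x₀| ⊓ x₀ = 0

/-- An equivalent lattice norm on `X`. -/
structure LatticeNorm (X : Type*) [NormedAddCommGroup X] [Lattice X] [NormedSpace ℝ X] where
  n : X → ℝ
  add_le : ∀ x y : X, n (x + y) ≤ n x + n y
  smul_eq : ∀ (r : ℝ) (x : X), n (r • x) = |r| * n x
  eq_zero_of : ∀ x : X, n x = 0 → x = 0
  mono : ∀ x y : X, |x| ≤ |y| → n x ≤ n y
  lower : ∃ c : ℝ, 0 < c ∧ ∀ x : X, c * ‖x‖ ≤ n x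
  upper : ∃ C : ℝ, 0 < C ∧ ∀ x : X, n x ≤ C * ‖x‖

open Filter Topology

section LatticeOrderedGroup

variable {X : Type*} [AddCommGroup X] [Lattice X] [IsOrderedAddMonoid X]

lemma nonneg_of_two_pow_nsmul_nonneg {a : X} : ∀ k : ℕ, 0 ≤ 2 ^ k • a → 0 ≤ a
  | 0, h => by simpa using h
  | k + 1, h => nonneg_of_two_pow_nsmul_nonneg k <| nsmul_two_semiclosed <| by
      rwa [pow_succ, mul_nsmul] at h

lemma dyadic_smul_nonneg [Module ℝ X] {x : X} (hx : 0 ≤ x) (m k : ℕ) :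
    0 ≤ ((m : ℝ) / 2 ^ k) • x := by
  apply nonneg_of_two_pow_nsmul_nonneg k
  rw [← Nat.cast_smul_eq_nsmul ℝ, smul_smul, Nat.cast_pow, Nat.cast_ofNat,
    mul_div_cancel₀ _ (by positivity), Nat.cast_smul_eq_nsmul]
  exact nsmul_nonneg hx m

end LatticeOrderedGroup

section NormedLattice

variable {X : Type*} [NormedAddCommGroup X] [Lattice X] [HasSolidNorm X] [IsOrderedAddMonoid X]
  [NormedSpace ℝ X]

/-- The positive cone is closed, so it contains `r • x` as a limit of dyadic multiples of `x`. -/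
lemma smul_nonneg_of_hasSolidNorm {r : ℝ} {x : X} (hr : 0 ≤ r) (hx : 0 ≤ x) : 0 ≤ r • x := by
  have hdyadic : Tendsto (fun k : ℕ ↦ (⌊r * 2 ^ k⌋₊ : ℝ) / 2 ^ k) atTop (𝓝 r) :=
    (tendsto_nat_floor_mul_div_atTop hr).comp (tendsto_pow_atTop_atTop_of_one_lt one_lt_two)
  exact (isClosed_nonneg.preimage (continuous_id.smul continuous_const)).mem_of_tendsto hdyadic
    (Eventually.of_forall fun k ↦ dyadic_smul_nonneg hx _ k)

instance HasSolidNorm.posSMulMono : PosSMulMono ℝ X :=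
  PosSMulMono.of_smul_nonneg fun _ hr _ hx ↦ smul_nonneg_of_hasSolidNorm hr hx

lemma abs_smul_of_pos {r : ℝ} (hr : 0 < r) (x : X) : |r • x| = r • |x| := by
  change r • x ⊔ -(r • x) = r • (x ⊔ -x)
  rw [← smul_neg]
  exact ((OrderIso.smulRight hr).map_sup x (-x)).symm

end NormedLattice

lemma ContinuousLinearMap.map_nonneg_of_forall_pos {E : Type*} [AddCommGroup E] [PartialOrder E]
    [TopologicalSpace E] [Module ℝ E] (μ : E →L[ℝ] ℝ) (hμ : ∀ x, 0 < x → 0 < μ x) (x : E)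
    (hx : 0 ≤ x) : 0 ≤ μ x :=
  hx.eq_or_lt.elim (fun h ↦ h ▸ (map_zero μ).ge) fun h ↦ (hμ x h).le

section MuNorm

variable {X : Type*} [NormedAddCommGroup X] [Lattice X] [HasSolidNorm X] [IsOrderedAddMonoid X]
  [NormedSpace ℝ X] {μ : X →L[ℝ] ℝ}

def muNorm (μ : X →L[ℝ] ℝ) (x : X) : ℝ := ‖x‖ + μ |x|

lemma muNorm_smul_of_pos {r : ℝ} (hr : 0 < r) (x : X) : muNorm μ (r • x) = r * muNorm μ x := by
  rw [muNorm, muNorm, norm_smul, abs_smul_of_pos hr, map_smul, smul_eq_mul,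
    Real.norm_of_nonneg hr.le, mul_add]

lemma muNorm_sub_lt (hμ : ∀ x, 0 < x → 0 < μ x) {a y : X} (hy : 0 < y) (hya : y ≤ a) :
    muNorm μ (a - y) < muNorm μ a := by
  have ha : 0 ≤ a := hy.le.trans hya
  have hay : 0 ≤ a - y := sub_nonneg.mpr hya
  have hnorm : ‖a - y‖ ≤ ‖a‖ :=
    HasSolidNorm.solid (by rw [abs_of_nonneg hay, abs_of_nonneg ha]; exact sub_le_self a hy.le)
  rw [muNorm, muNorm, abs_of_nonneg hay, abs_of_nonneg ha, map_sub]
  linarith [hμ y hy]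

lemma abs_apply_le_mul_muNorm (hμ : ∀ x, 0 ≤ x → 0 ≤ μ x) (f : X →L[ℝ] ℝ) {M : ℝ}
    (hM : ∀ y, muNorm μ y ≤ 1 → |f y| ≤ M) (x : X) : |f x| ≤ M * muNorm μ x := by
  rcases eq_or_ne x 0 with rfl | hx
  · simp [muNorm]
  have hN : 0 < muNorm μ x := add_pos_of_pos_of_nonneg (norm_pos_iff.mpr hx) (hμ _ (abs_nonneg x))
  have hunit := hM ((muNorm μ x)⁻¹ • x)
    (by rw [muNorm_smul_of_pos (inv_pos.mpr hN), inv_mul_cancel₀ hN.ne'])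
  rwa [map_smul, smul_eq_mul, abs_mul, abs_of_pos (inv_pos.mpr hN), inv_mul_le_iff₀ hN,
    mul_comm] at hunit

lemma eq_zero_of_le_of_muNorm_attained (hμ : ∀ x, 0 < x → 0 < μ x) {f : X →L[ℝ] ℝ} {a y : X}
    (hM : ∀ y, muNorm μ y ≤ 1 → |f y| ≤ f a) (ha : muNorm μ a ≤ 1) (hfa : 0 < f a)
    (hy : 0 ≤ y) (hya : y ≤ a) (hfy : f y = 0) : y = 0 := by
  by_contra hy0
  have hlt := muNorm_sub_lt hμ (hy.lt_of_ne (Ne.symm hy0)) hya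
  have hle := abs_apply_le_mul_muNorm (μ.map_nonneg_of_forall_pos hμ) f hM (a - y)
  rw [map_sub, hfy, sub_zero, abs_of_pos hfa] at hle
  nlinarith

end MuNorm

namespace IsLatticeHomFunctional

variable {X : Type*} [NormedAddCommGroup X] [Lattice X] [HasSolidNorm X] [IsOrderedAddMonoid X]
  [NormedSpace ℝ X] {f : X →L[ℝ] ℝ}

lemma map_sup_zero (hf : IsLatticeHomFunctional f) (x : X) : f (x ⊔ 0) = max (f x) 0 := by
  rw [hf, map_zero]

lemma map_nonneg (hf : IsLatticeHomFunctional f) {x : X} (hx : 0 ≤ x) : 0 ≤ f x := by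
  rw [← sup_eq_left.mpr hx, hf.map_sup_zero]
  exact le_max_right _ _

lemma map_abs (hf : IsLatticeHomFunctional f) (x : X) : f |x| = |f x| := by
  change f (x ⊔ -x) = max (f x) (-f x)
  rw [hf, map_neg]

lemma map_inf (hf : IsLatticeHomFunctional f) (x y : X) : f (x ⊓ y) = min (f x) (f y) := by
  rw [← neg_neg (x ⊓ y), neg_inf, map_neg, hf, map_neg, map_neg, max_neg_neg, neg_neg]

variable {a : X}

lemma isLatAtom_of_ker (hf : IsLatticeHomFunctional f) (ha : 0 ≤ a) (hfa : 0 < f a)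
    (hker : ∀ y, 0 ≤ y → y ≤ a → f y = 0 → y = 0) : IsLatAtom a := by
  refine ⟨ha.lt_of_ne (by rintro rfl; simp at hfa), fun y hy hya ↦ ⟨f y / f a, ?_⟩⟩
  set c := f y / f a
  have hc : 0 ≤ c := div_nonneg (hf.map_nonneg hy) hfa.le
  have hca : c • a ≤ a := by
    have : f y ≤ f a := by linarith [map_sub f a y ▸ hf.map_nonneg (sub_nonneg.mpr hya)]
    simpa [sub_smul] using smul_nonneg (sub_nonneg.mpr (div_le_one_of_le₀ this hfa.le)) ha
  set w := y - c • a
  have hfw : f w = 0 := by simp [w, c, div_mul_cancel₀ _ hfa.ne']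
  have hw_pos : w⁺ = 0 := hker _ (posPart_nonneg w)
    (sup_le ((sub_le_self y (smul_nonneg hc ha)).trans hya) ha)
    (by rw [posPart_def, hf.map_sup_zero, hfw, max_self])
  have hw_neg : w⁻ = 0 := hker _ (negPart_nonneg w)
    (sup_le ((neg_sub y (c • a) ▸ sub_le_self _ hy).trans hca) ha)
    (by rw [negPart_def, hf.map_sup_zero, map_neg, hfw, neg_zero, max_self])
  exact sub_eq_zero.mp (le_antisymm (posPart_eq_zero.mp hw_pos) (negPart_eq_zero.mp hw_neg))

lemma isCoordinateFunctional_of_ker (hf : IsLatticeHomFunctional f) (ha : 0 ≤ a) (hfa : 0 < f a)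
    (hker : ∀ y, 0 ≤ y → y ≤ a → f y = 0 → y = 0) : IsCoordinateFunctional ((f a)⁻¹ • f) a := by
  intro x
  refine hker _ (le_inf (abs_nonneg _) ha) inf_le_right ?_
  have hfx : f (x - ((f a)⁻¹ • f) x • a) = 0 := by
    simp [mul_right_comm _ (f x), hfa.ne']
  rw [hf.map_inf, hf.map_abs, hfx, abs_zero, min_eq_left hfa.le]

end IsLatticeHomFunctional

theorem latticeHom_attaining_mu_norm_is_coordinate_functional_general
    {X : Type*} [NormedAddCommGroup X] [Lattice X] [HasSolidNorm X] [IsOrderedAddMonoid X] [NormedSpace ℝ X]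
    (μ : X →L[ℝ] ℝ) (hμ : ∀ x : X, 0 < x → 0 < μ x)
    (f : X →L[ℝ] ℝ) (hf : IsLatticeHomFunctional f) (hf0 : f ≠ 0)
    (hatt : ∃ x₀ : X, ‖x₀‖ + μ |x₀| ≤ 1 ∧
      ∀ y : X, ‖y‖ + μ |y| ≤ 1 → |f y| ≤ |f x₀|) :
    ∃ (x₀ : X) (l : X →L[ℝ] ℝ) (c : ℝ),
      IsLatAtom x₀ ∧ IsCoordinateFunctional l x₀ ∧ 0 < c ∧ f = c • l := by
  obtain ⟨x₁, hx₁, hmax⟩ := hatt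
  set a := |x₁|
  have ha0 : 0 ≤ a := abs_nonneg x₁
  have ha : muNorm μ a ≤ 1 := by rwa [muNorm, abs_abs, norm_abs_eq_norm]
  have hM : ∀ y, muNorm μ y ≤ 1 → |f y| ≤ f a := by rw [hf.map_abs]; exact hmax
  have hfa : 0 < f a := by
    obtain ⟨x, hx⟩ : ∃ x, f x ≠ 0 := by
      by_contra! h
      exact hf0 (ContinuousLinearMap.ext h)
    refine (hf.map_nonneg ha0).lt_of_ne fun h ↦ hx (abs_nonpos_iff.mp ?_)
    simpa only [← h, zero_mul] using
      abs_apply_le_mul_muNorm (μ.map_nonneg_of_forall_pos hμ) f hM x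
  have hker : ∀ y, 0 ≤ y → y ≤ a → f y = 0 → y = 0 := fun y ↦
    eq_zero_of_le_of_muNorm_attained hμ hM ha hfa
  refine ⟨a, (f a)⁻¹ • f, f a, hf.isLatAtom_of_ker ha0 hfa hker,
    hf.isCoordinateFunctional_of_ker ha0 hfa hker, hfa, ?_⟩
  rw [smul_smul, mul_inv_cancel₀ hfa.ne', one_smul]

/-- if `μ` is a strictly positive functional on a Banach lattice `X`, then for
the equivalent lattice norm `‖x‖_μ := ‖x‖ + μ(|x|)`, every nonzero lattice homomorphism
attaining its `‖·‖_μ`-norm is a positive multiple of the coordinate functional of an atom. -/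
theorem latticeHom_attaining_mu_norm_is_coordinate_functional
    {X : Type*} [NormedAddCommGroup X] [Lattice X] [HasSolidNorm X] [IsOrderedAddMonoid X] [NormedSpace ℝ X] [CompleteSpace X]
    (μ : X →L[ℝ] ℝ) (hμ : ∀ x : X, 0 < x → 0 < μ x)
    (f : X →L[ℝ] ℝ) (hf : IsLatticeHomFunctional f) (hf0 : f ≠ 0)
    (hatt : ∃ x₀ : X, ‖x₀‖ + μ |x₀| ≤ 1 ∧
      ∀ y : X, ‖y‖ + μ |y| ≤ 1 → |f y| ≤ |f x₀|) :
    ∃ (x₀ : X) (l : X →L[ℝ] ℝ) (c : ℝ),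
      IsLatAtom x₀ ∧ IsCoordinateFunctional l x₀ ∧ 0 < c ∧ f = c • l :=
  latticeHom_attaining_mu_norm_is_coordinate_functional_general μ hμ f hf hf0 hatt
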